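/- arXiv:1006.5652 — 3 statements merged into one kernel-verified Lean document; each statement's English description precedes it below -/
import Mathlib

section
/- For 0 < q < 1 and every complex number z, the series ∑_{n=0}^∞ q^{n(n-1)/2} z^n/[n]_q! converges and equals the infinite product ∏_{k=0}^∞ (1 + (1-q) q^k z). -/
/-!
Writing `E_q(w)` for the series, the identity `(1 - q) [n+1]_q = 1 - q^(n+1)` gives the
functional equation `E_q(w) = (1 + (1 - q) w) E_q(q w)` term by term. Iterating it,
`E_q(z) = (∏_{k<N} (1 + (1 - q) q^k z)) E_q(q^N z)`, and `E_q(q^N z) → E_q(0) = 1` by dominated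
convergence (the terms of `E_q(q^N z)` are bounded by those of `E_q(z)`), so the partial
products converge to `E_q(z)`. Since `∑ |(1 - q) q^k z| < ∞`, the infinite product converges,
hence to the same limit.
-/

/-- The q-integer `[k]_q = 1 + q + q^2 + ⋯ + q^(k-1)`. -/
noncomputable def qInt (q : ℝ) (k : ℕ) : ℝ := ∑ i ∈ Finset.range k, q ^ i

/-- The q-factorial `[n]_q! = [1]_q [2]_q ⋯ [n]_q`, with `[0]_q! = 1`. -/
noncomputable def qFact (q : ℝ) (n : ℕ) : ℝ := ∏ k ∈ Finset.range n, qInt q (k + 1)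

open Filter Finset Topology

section

variable {q : ℝ}

lemma one_le_qInt_succ (hq : 0 ≤ q) (k : ℕ) : 1 ≤ qInt q (k + 1) := by
  simpa [qInt] using
    single_le_sum (f := (q ^ ·)) (fun i _ => by positivity) (mem_range.2 k.succ_pos)

lemma qInt_succ_pos (hq : 0 ≤ q) (k : ℕ) : 0 < qInt q (k + 1) :=
  one_pos.trans_le (one_le_qInt_succ hq k)

lemma qFact_succ (q : ℝ) (n : ℕ) : qFact q (n + 1) = qFact q n * qInt q (n + 1) :=
  prod_range_succ _ n

lemma one_sub_mul_qInt (q : ℝ) (n : ℕ) : (1 - q) * qInt q n = 1 - q ^ n :=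
  mul_neg_geom_sum q n

noncomputable def qExpTerm (q : ℝ) (w : ℂ) (n : ℕ) : ℂ :=
  (q : ℂ) ^ (n * (n - 1) / 2) * w ^ n / (qFact q n : ℂ)

/-- The q-exponential `E_q(w)`; its value is junk (`0`) unless the series converges. -/
noncomputable def qExp (q : ℝ) (w : ℂ) : ℂ := ∑' n, qExpTerm q w n

lemma qExpTerm_zero_right (q : ℝ) (w : ℂ) : qExpTerm q w 0 = 1 := by
  simp [qExpTerm, qFact]

lemma qExpTerm_succ (q : ℝ) (w : ℂ) (n : ℕ) :
    qExpTerm q w (n + 1) = qExpTerm q w n * ((q : ℂ) ^ n * w / (qInt q (n + 1) : ℂ)) := by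
  rw [qExpTerm, qExpTerm, Nat.triangle_succ, qFact_succ, Complex.ofReal_mul, div_mul_div_comm]
  ring

lemma qExpTerm_mul_left (q : ℝ) (c w : ℂ) (n : ℕ) :
    qExpTerm q (c * w) n = c ^ n * qExpTerm q w n := by
  simp only [qExpTerm, mul_pow]
  ring

lemma norm_qExpTerm_succ_le (hq : 0 ≤ q) (w : ℂ) (n : ℕ) :
    ‖qExpTerm q w (n + 1)‖ ≤ q ^ n * ‖w‖ * ‖qExpTerm q w n‖ := by
  have hqInt : ‖(qInt q (n + 1) : ℂ)‖ = qInt q (n + 1) := by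
    rw [Complex.norm_real, Real.norm_of_nonneg (qInt_succ_pos hq n).le]
  rw [qExpTerm_succ, norm_mul, mul_comm, norm_div, norm_mul, norm_pow, hqInt, Complex.norm_real,
    Real.norm_of_nonneg hq]
  gcongr
  exact div_le_self (by positivity) (one_le_qInt_succ hq n)

lemma summable_qExpTerm (hq0 : 0 ≤ q) (hq1 : q < 1) (w : ℂ) : Summable (qExpTerm q w) := by
  refine summable_of_ratio_norm_eventually_le (r := 1 / 2) (by norm_num) ?_
  have hlim : Tendsto (fun n : ℕ => q ^ n * ‖w‖) atTop (𝓝 0) := by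
    simpa using (tendsto_pow_atTop_nhds_zero_of_lt_one hq0 hq1).mul_const ‖w‖
  filter_upwards [hlim.eventually_le_const (by norm_num : (0 : ℝ) < 1 / 2)] with n hn
  exact (norm_qExpTerm_succ_le hq0 w n).trans (by gcongr)

lemma qExpTerm_succ_eq_add (hq : 0 ≤ q) (w : ℂ) (n : ℕ) :
    qExpTerm q w (n + 1) =
      qExpTerm q (q * w) (n + 1) + (1 - q) * w * qExpTerm q (q * w) n := by
  have hqInt : (qInt q (n + 1) : ℂ) ≠ 0 := by exact_mod_cast (qInt_succ_pos hq n).ne'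
  have hgeom : (1 - (q : ℂ)) * qInt q (n + 1) = 1 - (q : ℂ) ^ (n + 1) := by
    exact_mod_cast congrArg Complex.ofReal (one_sub_mul_qInt q (n + 1))
  rw [qExpTerm_mul_left, qExpTerm_mul_left, qExpTerm_succ]
  field_simp
  linear_combination -(qExpTerm q w n * q ^ n * w) * hgeom

lemma qExp_eq_mul_qExp_mul (hq0 : 0 ≤ q) (hq1 : q < 1) (w : ℂ) :
    qExp q w = (1 + (1 - q) * w) * qExp q (q * w) := by
  have hs := summable_qExpTerm hq0 hq1 (q * w)
  rw [qExp, qExp, (summable_qExpTerm hq0 hq1 w).tsum_eq_zero_add, qExpTerm_zero_right,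
    tsum_congr (qExpTerm_succ_eq_add hq0 w), ((summable_nat_add_iff 1).2 hs).tsum_add
      (hs.mul_left _), tsum_mul_left, hs.tsum_eq_zero_add, qExpTerm_zero_right]
  ring

lemma qExp_eq_prod_mul_qExp (hq0 : 0 ≤ q) (hq1 : q < 1) (z : ℂ) (N : ℕ) :
    qExp q z = (∏ k ∈ range N, (1 + (1 - q) * q ^ k * z)) * qExp q (q ^ N * z) := by
  induction N with
  | zero => simp
  | succ N ih =>
    rw [ih, qExp_eq_mul_qExp_mul hq0 hq1, prod_range_succ,
      show (q : ℂ) * (q ^ N * z) = q ^ (N + 1) * z by ring]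
    ring

lemma qExp_zero (q : ℝ) : qExp q 0 = 1 := by
  rw [qExp, tsum_eq_single 0 fun n hn => by simp [qExpTerm, hn], qExpTerm_zero_right]

lemma tendsto_qExp_pow_mul (hq0 : 0 ≤ q) (hq1 : q < 1) (z : ℂ) :
    Tendsto (fun N : ℕ => qExp q (q ^ N * z)) atTop (𝓝 1) := by
  rw [← qExp_zero q]
  refine tendsto_tsum_of_dominated_convergence (summable_qExpTerm hq0 hq1 z).norm
    (fun n => ?_) (Eventually.of_forall fun N n => ?_)
  · have hcont : Continuous fun w => qExpTerm q w n := by unfold qExpTerm; fun_prop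
    have hlim : Tendsto (fun N : ℕ => (q : ℂ) ^ N * z) atTop (𝓝 0) := by
      simpa using (tendsto_pow_atTop_nhds_zero_of_norm_lt_one
        (by simpa [abs_of_nonneg hq0] using hq1)).mul_const z
    exact (hcont.tendsto 0).comp hlim
  · rw [qExpTerm_mul_left, norm_mul]
    refine mul_le_of_le_one_left (norm_nonneg _) ?_
    simpa [norm_pow, abs_of_nonneg hq0] using
      pow_le_one₀ (pow_nonneg hq0 N) (pow_le_one₀ hq0 hq1.le)

lemma tendsto_prod_range_qExp (hq0 : 0 ≤ q) (hq1 : q < 1) (z : ℂ) :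
    Tendsto (fun N => ∏ k ∈ range N, (1 + (1 - (q : ℂ)) * q ^ k * z)) atTop
      (𝓝 (qExp q z)) := by
  have htail := tendsto_qExp_pow_mul hq0 hq1 z
  have hquot : Tendsto (fun N => qExp q z / qExp q (q ^ N * z)) atTop (𝓝 (qExp q z / 1)) :=
    tendsto_const_nhds.div htail one_ne_zero
  rw [div_one] at hquot
  refine hquot.congr' ?_
  filter_upwards [htail.eventually_ne one_ne_zero] with N hN
  rw [qExp_eq_prod_mul_qExp hq0 hq1 z N, mul_div_cancel_right₀ _ hN]

end

/-- For `0 < q < 1` and every complex `z`, the series `∑ q^(n(n-1)/2) z^n/[n]_q!`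
converges and equals the infinite product `∏_{k=0}^∞ (1 + (1-q) q^k z)`. -/
theorem Eq_exp_series_eq_prod (q : ℝ) (hq0 : 0 < q) (hq1 : q < 1) (z : ℂ) :
    Summable (fun n : ℕ => (q : ℂ) ^ (n * (n - 1) / 2) * z ^ n / (qFact q n : ℂ)) ∧
      (∑' n : ℕ, (q : ℂ) ^ (n * (n - 1) / 2) * z ^ n / (qFact q n : ℂ)) =
        ∏' k : ℕ, (1 + (1 - (q : ℂ)) * (q : ℂ) ^ k * z) := by
  refine ⟨summable_qExpTerm hq0.le hq1 z, ?_⟩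
  have hnorm : Summable fun k : ℕ => ‖(1 - (q : ℂ)) * q ^ k * z‖ := by
    simp only [norm_mul, norm_pow]
    have hgeom := summable_geometric_of_lt_one (norm_nonneg (q : ℂ)) (by simpa [abs_of_pos hq0])
    exact (hgeom.mul_left _).mul_right _
  exact tendsto_nhds_unique (tendsto_prod_range_qExp hq0.le hq1 z)
    (multipliable_one_add_of_summable hnorm).tendsto_prod_tprod_nat
end

section
/- For 0 < q < 1 and every complex number z with |z| < R_q = 2/(1-q), the series ∑_{n=0}^∞ z^n/{n}_q! converges, all factors 1 - q^k(1-q)z/2 are nonzero, and ∑_{n=0}^∞ z^n/{n}_q! = ∏_{k=0}^∞ (1 + q^k(1-q)z/2)/(1 - q^k(1-q)z/2). -/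
/-!
Let `E` be the sum of the power series `∑ zⁿ / {n}_q!`; by the ratio test its radius of
convergence is at least `2/(1-q)`, because `{n+1}_q → 2/(1-q)`. The identity
`{n+1}_q (1-q)(1+qⁿ) = 2(1-qⁿ⁺¹)` between consecutive coefficients is the q-difference equation
`(1 - (1-q)z/2) E(z) = (1 + (1-q)z/2) E(qz)`. Iterating it, `E(z) = (∏_{k<N} fₖ) E(qᴺz)` with
`fₖ` the factors of the product, and `E(qᴺz) → E(0) = 1` by continuity. The product converges
since `fₖ - 1 = O(qᵏ)`.
-/

/-- The symbol `{n}_q = 2(1-q^n)/((1-q)(1+q^(n-1)))` (for `n ≥ 1`). -/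
noncomputable def qBrace (q : ℝ) (n : ℕ) : ℝ :=
  2 * (1 - q ^ n) / ((1 - q) * (1 + q ^ (n - 1)))

/-- The factorial `{n}_q! = {1}_q {2}_q ⋯ {n}_q`, with `{0}_q! = 1`. -/
noncomputable def qBraceFact (q : ℝ) (n : ℕ) : ℝ := ∏ k ∈ Finset.range n, qBrace q (k + 1)

open Filter Topology

theorem eq_tprod_of_eq_mul_succ {M : Type*} [CommMonoid M] [TopologicalSpace M] [ContinuousMul M]
    [T2Space M] {f g : ℕ → M} (hf : Multipliable f) (hg : ∀ n, g n = f n * g (n + 1))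
    (hlim : Tendsto g atTop (𝓝 1)) : g 0 = ∏' n, f n := by
  have hpartial : ∀ N, g 0 = (∏ k ∈ Finset.range N, f k) * g N := by
    intro N
    induction N with
    | zero => simp
    | succ N ih => rw [ih, hg N, Finset.prod_range_succ, mul_assoc]
  have := hf.hasProd.tendsto_prod_nat.mul hlim
  rw [mul_one] at this
  exact tendsto_nhds_unique (tendsto_const_nhds.congr hpartial) this

theorem multipliable_one_add_div_one_sub {ι 𝕜 : Type*} [NormedField 𝕜] [CompleteSpace 𝕜]
    {u : ι → 𝕜} (hu : Summable fun i ↦ ‖u i‖) : Multipliable fun i ↦ (1 + u i) / (1 - u i) := by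
  have hsmall : ∀ᶠ i in cofinite, ‖u i‖ ≤ 1 / 2 :=
    hu.tendsto_cofinite_zero.eventually_le_const (by norm_num)
  have hv : Summable fun i ↦ ‖(1 + u i) / (1 - u i) - 1‖ := by
    refine .of_norm_bounded_eventually (hu.mul_left 4) ?_
    filter_upwards [hsmall] with i hi
    have hden : 1 / 2 ≤ ‖1 - u i‖ := by
      have := norm_sub_norm_le (1 : 𝕜) (u i)
      rw [norm_one] at this
      linarith
    have hne : 1 - u i ≠ 0 := norm_pos_iff.mp (by linarith)
    rw [norm_norm, div_sub_one hne, norm_div, div_le_iff₀ (by linarith)]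
    calc ‖1 + u i - (1 - u i)‖ ≤ ‖u i‖ + ‖u i‖ := by
          rw [show 1 + u i - (1 - u i) = u i + u i by ring]
          exact norm_add_le _ _
      _ ≤ 4 * ‖u i‖ * ‖1 - u i‖ := by nlinarith [norm_nonneg (u i)]
  simpa using multipliable_one_add_of_summable hv

section

variable {q : ℝ}

lemma qBrace_succ (q : ℝ) (n : ℕ) :
    qBrace q (n + 1) = 2 * (1 - q ^ (n + 1)) / ((1 - q) * (1 + q ^ n)) := by
  simp only [qBrace, Nat.add_sub_cancel]

lemma qBraceFact_succ (q : ℝ) (n : ℕ) :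
    qBraceFact q (n + 1) = qBraceFact q n * qBrace q (n + 1) :=
  Finset.prod_range_succ _ _

lemma qBrace_succ_mul (hq0 : 0 ≤ q) (hq1 : q < 1) (n : ℕ) :
    qBrace q (n + 1) * ((1 - q) * (1 + q ^ n)) = 2 * (1 - q ^ (n + 1)) := by
  have : 0 < 1 - q := by linarith
  rw [qBrace_succ]
  exact div_mul_cancel₀ _ (by positivity)

lemma qBrace_succ_pos (hq0 : 0 ≤ q) (hq1 : q < 1) (n : ℕ) : 0 < qBrace q (n + 1) := by
  have : q ^ (n + 1) < 1 := pow_lt_one₀ hq0 hq1 n.succ_ne_zero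
  have : 0 < 1 - q := by linarith
  rw [qBrace_succ]
  exact div_pos (by linarith) (by positivity)

lemma qBraceFact_pos (hq0 : 0 ≤ q) (hq1 : q < 1) (n : ℕ) : 0 < qBraceFact q n :=
  Finset.prod_pos fun k _ ↦ qBrace_succ_pos hq0 hq1 k

lemma tendsto_qBrace_succ (hq0 : 0 ≤ q) (hq1 : q < 1) :
    Tendsto (fun n ↦ qBrace q (n + 1)) atTop (𝓝 (2 / (1 - q))) := by
  have h := tendsto_pow_atTop_nhds_zero_of_lt_one hq0 hq1
  have hlim := ((h.mul_const q).const_sub 1 |>.const_mul 2).div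
    ((h.const_add 1).const_mul (1 - q)) (by rw [add_zero, mul_one]; linarith)
  simp only [zero_mul, sub_zero, mul_one, add_zero] at hlim
  simp only [qBrace_succ, pow_succ]
  exact hlim

lemma norm_ofReal_pow_mul_le (hq0 : 0 ≤ q) (hq1 : q ≤ 1) (N : ℕ) (y : ℂ) :
    ‖(q : ℂ) ^ N * y‖ ≤ ‖y‖ := by
  rw [norm_mul, norm_pow, Complex.norm_real, Real.norm_of_nonneg hq0]
  exact mul_le_of_le_one_left (norm_nonneg y) (pow_le_one₀ hq0 hq1)

lemma one_sub_mul_div_two_ne_zero (hq1 : q < 1) {y : ℂ} (hy : ‖y‖ < 2 / (1 - q)) :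
    1 - (1 - q) * y / 2 ≠ 0 := by
  have hnorm : ‖(1 - q) * y / 2‖ < 1 := by
    rw [norm_div, norm_mul, ← Complex.ofReal_one, ← Complex.ofReal_sub, Complex.norm_real,
      Real.norm_of_nonneg (by linarith), Complex.norm_two, div_lt_one two_pos,
      ← lt_div_iff₀' (by linarith)]
    exact hy
  exact sub_ne_zero.mpr (ne_of_apply_ne norm (by rw [norm_one]; exact hnorm.ne'))

noncomputable def qExpSeries (q : ℝ) : FormalMultilinearSeries ℂ ℂ ℂ :=
  .ofScalars ℂ fun n ↦ ((qBraceFact q n : ℂ))⁻¹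

lemma qExpSeries_apply (q : ℝ) (y : ℂ) (n : ℕ) :
    qExpSeries q n (fun _ ↦ y) = y ^ n / qBraceFact q n := by
  rw [qExpSeries, FormalMultilinearSeries.ofScalars_apply_eq, smul_eq_mul, inv_mul_eq_div]

lemma qExpSeries_sum_zero (q : ℝ) : (qExpSeries q).sum 0 = 1 := by
  simp [qExpSeries, ← FormalMultilinearSeries.ofScalarsSum.eq_def, qBraceFact]

lemma ofReal_le_qExpSeries_radius (hq0 : 0 ≤ q) (hq1 : q < 1) :
    ENNReal.ofReal (2 / (1 - q)) ≤ (qExpSeries q).radius := by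
  have hq : 0 < 1 - q := by linarith
  have hratio : Tendsto (fun n ↦ ‖(qBraceFact q (n + 1) : ℂ)⁻¹‖ / ‖(qBraceFact q n : ℂ)⁻¹‖)
      atTop (𝓝 ((2 / (1 - q))⁻¹)) := by
    refine ((tendsto_qBrace_succ hq0 hq1).inv₀ (by positivity)).congr fun n ↦ ?_
    have hF := qBraceFact_pos hq0 hq1 n
    have hB := qBrace_succ_pos hq0 hq1 n
    rw [qBraceFact_succ, norm_inv, norm_inv, Complex.norm_real, Complex.norm_real,
      Real.norm_of_nonneg hF.le, Real.norm_of_nonneg (mul_pos hF hB).le]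
    field_simp
  have hr : ((1 - q) / 2).toNNReal ≠ 0 := by simpa using hq
  have := FormalMultilinearSeries.inv_le_ofScalars_radius_of_tendsto ℂ
    (fun n ↦ ((qBraceFact q n : ℂ))⁻¹) hr
    (by rwa [Real.coe_toNNReal _ (by positivity), ← inv_div])
  rwa [← Real.toNNReal_inv, inv_div] at this

lemma mem_eball_qExpSeries_radius (hq0 : 0 ≤ q) (hq1 : q < 1) {y : ℂ}
    (hy : ‖y‖ < 2 / (1 - q)) : y ∈ Metric.eball 0 (qExpSeries q).radius := by
  rw [mem_eball_zero_iff, ← ofReal_norm]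
  exact (ENNReal.ofReal_lt_ofReal_iff_of_nonneg (norm_nonneg y)).2 hy
    |>.trans_le (ofReal_le_qExpSeries_radius hq0 hq1)

lemma hasSum_qExpSeries (hq0 : 0 ≤ q) (hq1 : q < 1) {y : ℂ} (hy : ‖y‖ < 2 / (1 - q)) :
    HasSum (fun n ↦ y ^ n / qBraceFact q n) ((qExpSeries q).sum y) := by
  simpa only [qExpSeries_apply] using
    (qExpSeries q).hasSum (mem_eball_qExpSeries_radius hq0 hq1 hy)

lemma continuousAt_qExpSeries_sum_zero (hq0 : 0 ≤ q) (hq1 : q < 1) :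
    ContinuousAt (qExpSeries q).sum 0 :=
  (qExpSeries q).continuousOn.continuousAt <| Metric.isOpen_eball.mem_nhds <|
    mem_eball_qExpSeries_radius hq0 hq1 (by rw [norm_zero]; exact div_pos two_pos (by linarith))

lemma pow_div_qBraceFact_succ_sub (hq0 : 0 ≤ q) (hq1 : q < 1) (y : ℂ) (n : ℕ) :
    y ^ (n + 1) / qBraceFact q (n + 1) - (q * y) ^ (n + 1) / qBraceFact q (n + 1) =
      (1 - q) * y / 2 * (y ^ n / qBraceFact q n + (q * y) ^ n / qBraceFact q n) := by
  have hF : (qBraceFact q n : ℂ) ≠ 0 := by exact_mod_cast (qBraceFact_pos hq0 hq1 n).ne'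
  have hB : (qBrace q (n + 1) : ℂ) ≠ 0 := by exact_mod_cast (qBrace_succ_pos hq0 hq1 n).ne'
  have hkey : (qBrace q (n + 1) : ℂ) * ((1 - q) * (1 + q ^ n)) = 2 * (1 - q ^ (n + 1)) := by
    exact_mod_cast qBrace_succ_mul hq0 hq1 n
  rw [qBraceFact_succ, Complex.ofReal_mul]
  field_simp
  linear_combination (-(y ^ (n + 1))) * hkey

lemma qExpSeries_sum_functional_eq (hq0 : 0 ≤ q) (hq1 : q < 1) {y : ℂ}
    (hy : ‖y‖ < 2 / (1 - q)) :
    (1 - (1 - q) * y / 2) * (qExpSeries q).sum y =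
      (1 + (1 - q) * y / 2) * (qExpSeries q).sum (q * y) := by
  have hqy : ‖(q : ℂ) * y‖ < 2 / (1 - q) := by
    simpa using (norm_ofReal_pow_mul_le hq0 hq1.le 1 y).trans_lt hy
  have hdiff := (hasSum_qExpSeries hq0 hq1 hy).sub (hasSum_qExpSeries hq0 hq1 hqy)
  rw [← hasSum_nat_add_iff' 1] at hdiff
  simp only [Finset.range_one, Finset.sum_singleton, pow_zero, sub_self, sub_zero,
    pow_div_qBraceFact_succ_sub hq0 hq1] at hdiff
  have hsum := ((hasSum_qExpSeries hq0 hq1 hy).add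
    (hasSum_qExpSeries hq0 hq1 hqy)).mul_left ((1 - q) * y / 2)
  linear_combination (hdiff.unique hsum)

lemma qExpSeries_sum_eq_div_mul (hq0 : 0 ≤ q) (hq1 : q < 1) {y : ℂ} (hy : ‖y‖ < 2 / (1 - q)) :
    (qExpSeries q).sum y =
      (1 + (1 - q) * y / 2) / (1 - (1 - q) * y / 2) * (qExpSeries q).sum (q * y) := by
  rw [div_mul_eq_mul_div, eq_div_iff (one_sub_mul_div_two_ne_zero hq1 hy)]
  linear_combination qExpSeries_sum_functional_eq hq0 hq1 hy

lemma tendsto_qExpSeries_sum_pow_mul (hq0 : 0 ≤ q) (hq1 : q < 1) (z : ℂ) :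
    Tendsto (fun N ↦ (qExpSeries q).sum ((q : ℂ) ^ N * z)) atTop (𝓝 1) := by
  have hnorm_q : ‖(q : ℂ)‖ < 1 := by rwa [Complex.norm_real, Real.norm_of_nonneg hq0]
  have hpow := (tendsto_pow_atTop_nhds_zero_of_norm_lt_one hnorm_q).mul_const z
  rw [zero_mul] at hpow
  have := (continuousAt_qExpSeries_sum_zero hq0 hq1).tendsto.comp hpow
  rwa [qExpSeries_sum_zero] at this

end

/-- For `0 < q < 1` and `|z| < 2/(1-q)`, the series `∑ z^n/{n}_q!` converges, the
factors `1 - q^k(1-q)z/2` are nonzero, and the series equals the infinite product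
`∏_{k=0}^∞ (1 + q^k(1-q)z/2)/(1 - q^k(1-q)z/2)`. -/
theorem improved_qExp_eq_tprod (q : ℝ) (hq0 : 0 < q) (hq1 : q < 1) (z : ℂ)
    (hz : ‖z‖ < 2 / (1 - q)) :
    Summable (fun n : ℕ => z ^ n / (qBraceFact q n : ℂ)) ∧
    (∀ k : ℕ, 1 - (q : ℂ) ^ k * (1 - (q : ℂ)) * z / 2 ≠ 0) ∧
    (∑' n : ℕ, z ^ n / (qBraceFact q n : ℂ)) =
      ∏' k : ℕ, (1 + (q : ℂ) ^ k * (1 - (q : ℂ)) * z / 2) /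
        (1 - (q : ℂ) ^ k * (1 - (q : ℂ)) * z / 2) := by
  have hqz (N : ℕ) : ‖(q : ℂ) ^ N * z‖ < 2 / (1 - q) :=
    (norm_ofReal_pow_mul_le hq0.le hq1.le N z).trans_lt hz
  have hfactor (k : ℕ) : (q : ℂ) ^ k * (1 - q) * z / 2 = (1 - q) * ((q : ℂ) ^ k * z) / 2 := by
    ring
  have hden (k : ℕ) : 1 - (q : ℂ) ^ k * (1 - q) * z / 2 ≠ 0 := by
    rw [hfactor]
    exact one_sub_mul_div_two_ne_zero hq1 (hqz k)
  refine ⟨(hasSum_qExpSeries hq0.le hq1 hz).summable, hden, ?_⟩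
  rw [(hasSum_qExpSeries hq0.le hq1 hz).tsum_eq]
  have hstep (N : ℕ) : (qExpSeries q).sum ((q : ℂ) ^ N * z) =
      (1 + (q : ℂ) ^ N * (1 - q) * z / 2) / (1 - (q : ℂ) ^ N * (1 - q) * z / 2) *
        (qExpSeries q).sum ((q : ℂ) ^ (N + 1) * z) := by
    have h := qExpSeries_sum_eq_div_mul hq0.le hq1 (hqz N)
    rwa [← hfactor, ← mul_assoc, ← pow_succ'] at h
  have hmult : Multipliable fun k : ℕ ↦
      (1 + (q : ℂ) ^ k * (1 - q) * z / 2) / (1 - (q : ℂ) ^ k * (1 - q) * z / 2) := by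
    refine multipliable_one_add_div_one_sub <|
      ((summable_geometric_of_lt_one hq0.le hq1).mul_right ‖(1 - q) * z / 2‖).congr fun k ↦ ?_
    rw [mul_assoc, mul_div_assoc ((q : ℂ) ^ k), norm_mul, norm_pow, Complex.norm_real,
      Real.norm_of_nonneg hq0.le]
  simpa using eq_tprod_of_eq_mul_succ hmult hstep (tendsto_qExpSeries_sum_pow_mul hq0.le hq1 z)
end

section
/- Let q > 0, q ≠ 1, and let R_q = 2/(1-q) if 0 < q < 1 and R_q = 2q/(q-1) if q > 1. Then for every complex number z with |z| < R_q, one has 𝓔_q(-z) · 𝓔_q(z) = 1, where 𝓔_q(z) = ∑_{n=0}^∞ z^n/{n}_q!. -/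
/-- The radius `R_q = 2/(1-q)` for `0 < q < 1` and `R_q = 2q/(q-1)` for `q > 1`. -/
noncomputable def Rq (q : ℝ) : ℝ := if q < 1 then 2 / (1 - q) else 2 * q / (q - 1)

/-- The improved q-exponential function `𝓔_q(z) = ∑_{n=0}^∞ z^n/{n}_q!`. -/
noncomputable def impExp (q : ℝ) (z : ℂ) : ℂ := ∑' n : ℕ, z ^ n / (qBraceFact q n : ℂ)

/-!
With `aₙ = 1/{n}_q!` and `c = (1-q)/2`, the defining recursion of `{n}_q` reads
`(1 - q^(n+1)) a_(n+1) = c (1 + q^n) aₙ`, i.e. the formal series `A(x) = ∑ aₙ xⁿ` satisfies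
`(1 - c x) A(x) = (1 + c x) A(q x)`. Substituting `-x` and multiplying, `G(x) = A(-x) A(x)` satisfies
`G(x) = G(q x)`, so all its coefficients of positive degree vanish and `G = 1`. For `|z| < R_q`
the series `∑ aₙ zⁿ` converges absolutely (ratio test, `{n}_q → R_q`), so the Cauchy product
evaluates `G` at `z`.
-/

open Filter Topology

namespace PowerSeries

variable {R : Type*} [CommRing R]

theorem one_sub_C_mul_X_mul_mk_eq {a : ℕ → R} {c q : R}
    (ha : ∀ n, (1 - q ^ (n + 1)) * a (n + 1) = c * (1 + q ^ n) * a n) :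
    (1 - C c * X) * mk a = (1 + C c * X) * rescale q (mk a) := by
  ext (_ | n)
  · simp [← coeff_zero_eq_constantCoeff_apply (rescale q _)]
  · simp only [sub_mul, add_mul, one_mul, map_sub, map_add, mul_assoc, coeff_C_mul,
      coeff_succ_X_mul, coeff_rescale, coeff_mk]
    linear_combination ha n

theorem rescale_rescale_neg_one_mul_self {A : R⟦X⟧} {c q : R}
    (hA : (1 - C c * X) * A = (1 + C c * X) * rescale q A) :
    rescale q (rescale (-1) A * A) = rescale (-1) A * A := by
  have hB : (1 + C c * X) * rescale (-1) A = (1 - C c * X) * rescale q (rescale (-1) A) := by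
    have := congrArg (rescale (-1)) hA
    have hC : rescale (-1) (C c) = C c := by ext (_ | n) <;> simp [coeff_rescale, coeff_C]
    simp only [map_mul, map_sub, map_add, map_one, rescale_neg_one_X, rescale_rescale, hC] at this
    rw [rescale_rescale, neg_one_mul, ← mul_neg_one q]
    linear_combination this
  have hu : IsUnit ((1 - C c * X) * (1 + C c * X)) := by
    rw [isUnit_iff_constantCoeff]; simp
  apply hu.mul_left_cancel
  rw [map_mul]
  linear_combination -((1 + C c * X) * rescale (-1) A * hA + (1 + C c * X) * rescale q A * hB)

theorem coeff_eq_zero_of_rescale_eq [NoZeroDivisors R] {G : R⟦X⟧} {q : R}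
    (hG : rescale q G = G) {n : ℕ} (hn : q ^ n ≠ 1) : coeff n G = 0 := by
  have h := congrArg (coeff n) hG
  rw [coeff_rescale] at h
  have h' : (q ^ n - 1) * coeff n G = 0 := by linear_combination h
  exact (mul_eq_zero.mp h').resolve_left (sub_ne_zero.mpr hn)

theorem tsum_coeff_mul {S : Type*} [NormedRing S] [CompleteSpace S] {f g : S⟦X⟧}
    (hf : Summable fun n => ‖coeff n f‖) (hg : Summable fun n => ‖coeff n g‖) :
    (∑' n, coeff n f) * ∑' n, coeff n g = ∑' n, coeff n (f * g) := by
  simp_rw [coeff_mul]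
  exact tsum_mul_tsum_eq_tsum_sum_antidiagonal_of_summable_norm hf hg

end PowerSeries

open PowerSeries

variable {q : ℝ}

theorem pow_succ_ne_one (hq : 0 ≤ q) (hq1 : q ≠ 1) (n : ℕ) : q ^ (n + 1) ≠ 1 :=
  fun h => hq1 ((pow_eq_one_iff_of_nonneg hq n.succ_ne_zero).mp h)

theorem one_sub_pow_succ_mul_inv_qBraceFact_succ (hq : 0 ≤ q) (hq1 : q ≠ 1) (n : ℕ) :
    (1 - q ^ (n + 1)) * (qBraceFact q (n + 1))⁻¹
      = (1 - q) / 2 * (1 + q ^ n) * (qBraceFact q n)⁻¹ := by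
  have h1 : 1 - q ^ (n + 1) ≠ 0 := sub_ne_zero.mpr (pow_succ_ne_one hq hq1 n).symm
  rw [qBraceFact, Finset.prod_range_succ, ← qBraceFact, mul_inv, qBrace, inv_div,
    Nat.add_sub_cancel]
  field_simp

noncomputable def impExpSeries (q : ℝ) : ℂ⟦X⟧ := mk fun n => ((qBraceFact q n : ℂ))⁻¹

theorem impExpSeries_functional_eq (hq : 0 ≤ q) (hq1 : q ≠ 1) :
    (1 - C (((1 - q) / 2 : ℝ) : ℂ) * X) * impExpSeries q
      = (1 + C (((1 - q) / 2 : ℝ) : ℂ) * X) * rescale (q : ℂ) (impExpSeries q) :=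
  one_sub_C_mul_X_mul_mk_eq fun n => by
    exact_mod_cast congrArg ((↑) : ℝ → ℂ) (one_sub_pow_succ_mul_inv_qBraceFact_succ hq hq1 n)

theorem rescale_neg_one_impExpSeries_mul_self (hq : 0 ≤ q) (hq1 : q ≠ 1) :
    rescale (-1) (impExpSeries q) * impExpSeries q = 1 := by
  have hG := rescale_rescale_neg_one_mul_self (impExpSeries_functional_eq hq hq1)
  ext (_ | n)
  · simp [impExpSeries, qBraceFact, rescale_mk]
  · rw [coeff_eq_zero_of_rescale_eq hG ?_, coeff_one, if_neg n.succ_ne_zero]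
    exact_mod_cast pow_succ_ne_one hq hq1 n

theorem impExp_eq_tsum_coeff (q : ℝ) (z : ℂ) :
    impExp q z = ∑' n, coeff n (rescale z (impExpSeries q)) := by
  simp [impExp, impExpSeries, coeff_rescale, div_eq_mul_inv]

theorem qBrace_inv_succ (hq : q ≠ 0) (n : ℕ) : qBrace q⁻¹ (n + 1) = qBrace q (n + 1) := by
  have hqn : -q ^ (n + 1) ≠ 0 := neg_ne_zero.mpr (pow_ne_zero _ hq)
  rw [qBrace, qBrace, ← mul_div_mul_right _ _ hqn, Nat.add_sub_cancel, inv_pow, inv_pow]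
  congr 1 <;> field_simp <;> ring

theorem Rq_inv (hq : 1 < q) : Rq q⁻¹ = Rq q := by
  have hq0 : q ≠ 0 := by positivity
  rw [Rq, Rq, if_pos (inv_lt_one_of_one_lt₀ hq), if_neg hq.not_gt]
  field_simp

theorem tendsto_qBrace_of_lt_one (hq : 0 ≤ q) (hq1 : q < 1) :
    Tendsto (fun n => qBrace q (n + 1)) atTop (𝓝 (Rq q)) := by
  have hf : ContinuousAt (fun t : ℝ => 2 * (1 - q * t) / ((1 - q) * (1 + t))) 0 :=
    ContinuousAt.div (by fun_prop) (by fun_prop) (by simp; linarith)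
  have := hf.tendsto.comp (tendsto_pow_atTop_nhds_zero_of_lt_one hq hq1)
  simpa [Rq, hq1, qBrace, pow_succ, mul_comm, Function.comp_def] using this

theorem tendsto_qBrace (hq : 0 < q) (hq1 : q ≠ 1) :
    Tendsto (fun n => qBrace q (n + 1)) atTop (𝓝 (Rq q)) := by
  rcases hq1.lt_or_gt with h | h
  · exact tendsto_qBrace_of_lt_one hq.le h
  · rw [← Rq_inv h]
    simpa only [qBrace_inv_succ hq.ne'] using
      tendsto_qBrace_of_lt_one (inv_nonneg.mpr hq.le) (inv_lt_one_of_one_lt₀ h)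

theorem summable_norm_coeff_rescale_impExpSeries (hq : 0 < q) (hq1 : q ≠ 1) {z : ℂ}
    (hz : ‖z‖ < Rq q) : Summable fun n => ‖coeff n (rescale z (impExpSeries q))‖ := by
  obtain ⟨r, hzr, hrR⟩ := exists_between hz
  have hr : 0 < r := (norm_nonneg z).trans_lt hzr
  refine summable_of_ratio_norm_eventually_le ((div_lt_one hr).mpr hzr) ?_
  filter_upwards [(tendsto_qBrace hq hq1).eventually (lt_mem_nhds hrR)] with n hn
  have hterm : coeff (n + 1) (rescale z (impExpSeries q))
      = z / qBrace q (n + 1) * coeff n (rescale z (impExpSeries q)) := by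
    simp only [coeff_rescale, impExpSeries, coeff_mk, qBraceFact, Finset.prod_range_succ]
    push_cast
    rw [mul_inv]
    ring
  rw [norm_norm, norm_norm, hterm, norm_mul, norm_div, Complex.norm_real,
    Real.norm_of_nonneg (hr.trans hn).le]
  gcongr

/-- For `|z| < R_q`, `𝓔_q(-z) · 𝓔_q(z) = 1`. -/
theorem impExp_neg_mul_impExp (q : ℝ) (hq : 0 < q) (hq1 : q ≠ 1) (z : ℂ)
    (hz : ‖z‖ < Rq q) : impExp q (-z) * impExp q z = 1 := by
  have hprod : rescale (-z) (impExpSeries q) * rescale z (impExpSeries q) = 1 := by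
    rw [neg_eq_neg_one_mul, rescale_mul, RingHom.comp_apply, ← map_mul,
      rescale_neg_one_impExpSeries_mul_self hq.le hq1, map_one]
  rw [impExp_eq_tsum_coeff, impExp_eq_tsum_coeff,
    tsum_coeff_mul (summable_norm_coeff_rescale_impExpSeries hq hq1 (by rwa [norm_neg]))
      (summable_norm_coeff_rescale_impExpSeries hq hq1 hz), hprod]
  simp [coeff_one]
end
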